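/- In the balanced parentheses string P of an ordinal tree with π(1)=1, π(0)=−1, the level ancestor of a node x at distance i (the ancestor y with depth(y) = depth(x) − i) is given by bwd_search: level_ancestor(x,i) = max { j ≤ x : Σ_{k=j}^{x} π(P[k]) = i+1 }. -/
import Mathlib


/-- Ordinal (rooted, ordered) trees. -/
inductive OTree where
  | node : List OTree → OTree

/-- Balanced parentheses (DFS) encoding: `true` = opening, `false` = closing. -/
def bp : OTree → List Bool
  | .node ts => true :: (ts.attach.map (fun ⟨t, _⟩ => bp t)).flatten ++ [false]

/-- `π(1) = 1`, `π(0) = -1`. -/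
def piB (b : Bool) : ℤ := if b then 1 else -1

/-- `π(P)[k]`: prefix sum of `π` over the first `k` characters of `P` (1-indexed). -/
def lpsum (P : List Bool) (k : ℕ) : ℤ := ((P.take k).map piB).sum

lemma bp_eq (ts : List OTree) : bp (.node ts) = true :: (ts.map bp).flatten ++ [false] := by
  simp [bp]

mutual
theorem sum_bp (t : OTree) : ((bp t).map piB).sum = 0 := by
  cases t with
  | node ts =>
    rw [bp_eq]
    simp [piB, sum_flat ts]
theorem sum_flat (ts : List OTree) : (List.map (List.sum ∘ List.map piB ∘ bp) ts).sum = 0 := by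
  cases ts with
  | nil => simp
  | cons t ts => simp [sum_bp t, sum_flat ts]
end

theorem sum_flat' (ts : List OTree) : (((ts.map bp).flatten).map piB).sum = 0 := by
  simp [sum_flat ts]

mutual
theorem pref_pos (t : OTree) (m : ℕ) (h1 : 1 ≤ m) (h2 : m < (bp t).length) :
    1 ≤ (((bp t).take m).map piB).sum := by
  cases t with
  | node ts =>
    rw [bp_eq] at h2 ⊢
    cases m with
    | zero => omega
    | succ m' =>
      have hm1 : m' + 1 ≤ (true :: (ts.map bp).flatten).length := by
        simp only [List.length_cons, List.length_append, List.length_nil] at h2 ⊢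
        omega
      rw [List.take_append_of_le_length hm1, List.take_succ_cons]
      have := pref_flat ts m'
      simp only [List.map_cons, List.sum_cons, piB, if_true]
      linarith
termination_by (sizeOf t, 0)
theorem pref_nonneg (t : OTree) (m : ℕ) : 0 ≤ (((bp t).take m).map piB).sum := by
  by_cases h0 : m = 0
  · simp [h0]
  · by_cases h2 : m < (bp t).length
    · have := pref_pos t m (by omega) h2
      linarith
    · rw [List.take_of_length_le (by omega)]
      rw [sum_bp t]
termination_by (sizeOf t, 1)
theorem pref_flat (ts : List OTree) (m : ℕ) :
    0 ≤ ((((ts.map bp).flatten).take m).map piB).sum := by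
  cases ts with
  | nil => simp
  | cons t ts =>
    rw [List.map_cons, List.flatten_cons, List.take_append,
      List.map_append, List.sum_append]
    have h1 := pref_nonneg t m
    have h2 := pref_flat ts (m - (bp t).length)
    linarith
termination_by (sizeOf ts, 0)
end

lemma lpsum_left (u v : List Bool) (k : ℕ) (h : k ≤ u.length) :
    lpsum (u ++ v) k = lpsum u k := by
  unfold lpsum; rw [List.take_append_of_le_length h]

lemma lpsum_add (u v : List Bool) (m : ℕ) :
    lpsum (u ++ v) (u.length + m) = (u.map piB).sum + lpsum v m := by
  unfold lpsum
  rw [List.take_append, List.take_of_length_le (by omega),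
    Nat.add_sub_cancel_left, List.map_append, List.sum_append]

lemma bp_len2 (t : OTree) : 2 ≤ (bp t).length := by
  cases t with | node ts => rw [bp_eq]; simp

lemma lpsum_bp_one (t : OTree) : lpsum (bp t) 1 = 1 := by
  cases t with
  | node ts =>
    rw [bp_eq]
    simp [lpsum, piB, List.take_append]

/-- `level_ancestor(x,i) = bwd_search(P,π,x,i+1)`: if `y` is the ancestor of `x` with
`depth(y) = depth(x) - i` (`i ≥ 1`), then `y` is the maximal position `j ≤ x` with
`Σ_{k=j}^{x} π(P[k]) = i+1`.  Here the ancestor `y` (the root of subtree `ty`) and the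
node `x` (the root of subtree `tx`, occurring inside `bp ty`) are identified with the
positions of their opening parentheses in `P = u ++ bp ty ++ w`, and
`Σ_{k=j}^{x} π(P[k]) = π(P)[x] - π(P)[j-1]`; the depth condition reads
`π(P)[x] - π(P)[y] = i` since `depth(z) = π(P)[z] - 1`. -/
theorem stmt10 (u w a b : List Bool) (ty tx : OTree) (i : ℕ) (hi : 1 ≤ i)
    (hnest : bp ty = a ++ bp tx ++ b) :
    let P := u ++ bp ty ++ w
    let y := u.length + 1
    let x := u.length + a.length + 1
    lpsum P x - lpsum P y = (i : ℤ) →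
    y = sSup {j | 1 ≤ j ∧ j ≤ x ∧ lpsum P x - lpsum P (j - 1) = (i : ℤ) + 1} := by
  intro P y x hsum
  have hlenty : (bp ty).length = a.length + (bp tx).length + b.length := by
    rw [hnest]; simp; omega
  have htx2 := bp_len2 tx
  have hPty : P = u ++ (bp ty ++ w) := by simp [P, List.append_assoc]
  have key : ∀ m, m ≤ (bp ty).length → lpsum P (u.length + m) = (u.map piB).sum + lpsum (bp ty) m := by
    intro m hm
    rw [hPty, lpsum_add, lpsum_left _ _ _ hm]
  have h0 : lpsum P u.length = (u.map piB).sum := by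
    have := key 0 (by omega)
    simpa [lpsum] using this
  have hy : lpsum P y = (u.map piB).sum + 1 := by
    have := key 1 (by omega)
    rw [lpsum_bp_one] at this
    exact this
  have hxval : lpsum P x = (u.map piB).sum + lpsum (bp ty) (a.length + 1) := by
    have := key (a.length + 1) (by omega)
    rw [← Nat.add_assoc] at this
    exact this
  have hah : lpsum (bp ty) (a.length + 1) = (i : ℤ) + 1 := by
    rw [hxval, hy] at hsum; linarith
  have hyS : y ∈ {j | 1 ≤ j ∧ j ≤ x ∧ lpsum P x - lpsum P (j - 1) = (i : ℤ) + 1} := by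
    refine ⟨by omega, by omega, ?_⟩
    have : y - 1 = u.length := by omega
    rw [this, h0, hxval, hah]; ring
  have hub : ∀ j ∈ {j | 1 ≤ j ∧ j ≤ x ∧ lpsum P x - lpsum P (j - 1) = (i : ℤ) + 1}, j ≤ y := by
    rintro j ⟨hj1, hjx, hjv⟩
    by_contra hc
    push_neg at hc
    set m := j - 1 - u.length with hm
    have hm1 : 1 ≤ m := by omega
    have hma : m ≤ a.length := by omega
    have hj1e : j - 1 = u.length + m := by omega
    have hmlt : m < (bp ty).length := by omega
    have hpos : 1 ≤ lpsum (bp ty) m := pref_pos ty m hm1 hmlt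
    rw [hj1e, key m (by omega), hxval, hah] at hjv
    linarith
  exact le_antisymm (le_csSup ⟨x, fun j hj => hj.2.1⟩ hyS)
    (csSup_le ⟨y, hyS⟩ hub) |>.symm ▸ rfl
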